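/- (Excess kurtosis of the standard leptokurtic-normal density equals β) Let d ≥ 1 be an integer and β be any real number. Then ∫_{ℝ^d} ‖x‖⁴ · q(‖x‖²; β) · φ_d(x) dx = d(d+2) + β, where ‖x‖ is the Euclidean norm on ℝ^d; that is, the Mardia excess kurtosis of the density x ↦ q(‖x‖²; β)·φ_d(x) equals β. -/

import Mathlib

open Real MeasureTheory

/-- The leptokurtic-normal kurtosis weight
`q(y; β) = 1 + (β / (8 d (d+2))) (y² − 2(d+2)y + d(d+2))`. -/
noncomputable def lnWeight (d : ℕ) (β y : ℝ) : ℝ :=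
  1 + β / (8 * (d : ℝ) * ((d : ℝ) + 2)) *
    (y ^ 2 - 2 * ((d : ℝ) + 2) * y + (d : ℝ) * ((d : ℝ) + 2))

/-- The standard `d`-variate normal density
`φ_d(x) = (2π)^{−d/2} exp(−‖x‖²/2)`. -/
noncomputable def stdNormalPdf (d : ℕ) (x : EuclideanSpace ℝ (Fin d)) : ℝ :=
  (2 * π) ^ (-(d : ℝ) / 2) * Real.exp (-‖x‖ ^ 2 / 2)

/-!
The density is radial, so polar coordinates turn each moment `∫ ‖x‖^m φ_d` into
`∫₀^∞ r^(d-1+m) e^(-r²/2) dr`, a Gamma value up to a factor independent of `m`;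
`Γ(s + 1) = s Γ(s)` then gives `∫ ‖x‖^(2k+2) φ_d = (d + 2k) ∫ ‖x‖^(2k) φ_d`, so the
moments of `‖x‖²` are `d, d(d+2), d(d+2)(d+4), …`. Against the quartic weight the
`β`-part contributes `β/(8d(d+2)) · d(d+2)((d+4)(d+6) - 2(d+2)(d+4) + d(d+2)) = β`.
-/

open Set Metric Module

lemma integrableOn_pow_mul_exp_neg_sq_div_two (n : ℕ) :
    IntegrableOn (fun r : ℝ => r ^ n * exp (-r ^ 2 / 2)) (Ioi 0) := by
  refine (integrableOn_rpow_mul_exp_neg_mul_sq one_half_pos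
    (neg_one_lt_zero.trans_le n.cast_nonneg)).congr_fun
    (fun r _ => ?_) measurableSet_Ioi
  simp only [rpow_natCast]
  ring_nf

lemma integral_pow_mul_exp_neg_sq_div_two (n : ℕ) :
    ∫ r in Ioi (0 : ℝ), r ^ n * exp (-r ^ 2 / 2) =
      2 ^ (((n : ℝ) + 1) / 2) / 2 * Gamma ((n + 1) / 2) := by
  have h := integral_rpow_mul_exp_neg_mul_rpow two_pos
    (neg_one_lt_zero.trans_le n.cast_nonneg) one_half_pos
  convert h using 1
  · refine setIntegral_congr_fun measurableSet_Ioi fun r _ => ?_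
    simp only [rpow_natCast, rpow_two]
    ring_nf
  · rw [one_div, inv_rpow zero_le_two, ← rpow_neg zero_le_two, neg_div, neg_neg]
    ring

lemma integral_pow_add_two_mul_exp_neg_sq_div_two (n : ℕ) :
    ∫ r in Ioi (0 : ℝ), r ^ (n + 2) * exp (-r ^ 2 / 2) =
      (n + 1) * ∫ r in Ioi (0 : ℝ), r ^ n * exp (-r ^ 2 / 2) := by
  have hx : (((n + 2 : ℕ) : ℝ) + 1) / 2 = ((n : ℝ) + 1) / 2 + 1 := by push_cast; ring
  rw [integral_pow_mul_exp_neg_sq_div_two, integral_pow_mul_exp_neg_sq_div_two, hx,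
    Gamma_add_one (by positivity), rpow_add_one two_ne_zero]
  ring

section NormedSpace

variable {E : Type*} [NormedAddCommGroup E] [InnerProductSpace ℝ E] [FiniteDimensional ℝ E]
  [Nontrivial E] [MeasurableSpace E] [BorelSpace E] (μ : Measure E) [μ.IsAddHaarMeasure]

lemma integrable_norm_pow_mul_exp_neg_sq_div_two (m : ℕ) :
    Integrable (fun x : E => ‖x‖ ^ m * exp (-‖x‖ ^ 2 / 2)) μ := by
  rw [integrable_fun_norm_addHaar μ (f := fun r => r ^ m * exp (-r ^ 2 / 2))]
  simpa only [smul_eq_mul, ← mul_assoc, ← pow_add] using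
    integrableOn_pow_mul_exp_neg_sq_div_two (finrank ℝ E - 1 + m)

lemma integral_norm_pow_mul_exp_neg_sq_div_two (m : ℕ) :
    ∫ x, ‖x‖ ^ m * exp (-‖x‖ ^ 2 / 2) ∂μ = finrank ℝ E * μ.real (ball 0 1) *
      ∫ r in Ioi (0 : ℝ), r ^ (finrank ℝ E - 1 + m) * exp (-r ^ 2 / 2) := by
  rw [integral_fun_norm_addHaar μ (fun r => r ^ m * exp (-r ^ 2 / 2))]
  simp only [nsmul_eq_mul, smul_eq_mul, ← mul_assoc, ← pow_add]

lemma integral_norm_pow_add_two_mul_exp_neg_sq_div_two (m : ℕ) :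
    ∫ x, ‖x‖ ^ (m + 2) * exp (-‖x‖ ^ 2 / 2) ∂μ =
      (finrank ℝ E + m) * ∫ x, ‖x‖ ^ m * exp (-‖x‖ ^ 2 / 2) ∂μ := by
  have hdim : 1 ≤ finrank ℝ E := finrank_pos
  have hexp : ((finrank ℝ E - 1 + m : ℕ) : ℝ) + 1 = finrank ℝ E + m := by
    push_cast [hdim]; ring
  rw [integral_norm_pow_mul_exp_neg_sq_div_two, integral_norm_pow_mul_exp_neg_sq_div_two,
    ← add_assoc, integral_pow_add_two_mul_exp_neg_sq_div_two, hexp]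
  ring

end NormedSpace

lemma integral_norm_pow_mul_stdNormalPdf (d m : ℕ) :
    ∫ x, ‖x‖ ^ m * stdNormalPdf d x =
      (2 * π) ^ (-(d : ℝ) / 2) *
        ∫ x : EuclideanSpace ℝ (Fin d), ‖x‖ ^ m * exp (-‖x‖ ^ 2 / 2) := by
  simp only [stdNormalPdf, mul_left_comm (_ ^ m)]
  exact MeasureTheory.integral_const_mul _ _

lemma integral_stdNormalPdf (d : ℕ) : ∫ x, stdNormalPdf d x = 1 := by
  have hgauss :
      ∫ x : EuclideanSpace ℝ (Fin d), exp (-‖x‖ ^ 2 / 2) = (2 * π) ^ ((d : ℝ) / 2) := by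
    have h := GaussianFourier.integral_rexp_neg_mul_sq_norm (V := EuclideanSpace ℝ (Fin d))
      one_half_pos
    rw [finrank_euclideanSpace_fin, div_div_eq_mul_div, div_one, mul_comm π] at h
    simpa only [neg_mul, one_div_mul_eq_div, neg_div] using h
  have h := integral_norm_pow_mul_stdNormalPdf d 0
  simp only [pow_zero, one_mul] at h
  rw [h, hgauss, ← rpow_add two_pi_pos, neg_div, neg_add_cancel, rpow_zero]

lemma integral_norm_pow_mul_stdNormalPdf_eq_prod (d : ℕ) (hd : 1 ≤ d) (k : ℕ) :
    ∫ x, ‖x‖ ^ (2 * k) * stdNormalPdf d x = ∏ i ∈ Finset.range k, ((d : ℝ) + 2 * i) := by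
  have : Nonempty (Fin d) := ⟨⟨0, hd⟩⟩
  induction k with
  | zero => simpa using integral_stdNormalPdf d
  | succ k ih =>
    rw [integral_norm_pow_mul_stdNormalPdf] at ih ⊢
    rw [mul_add_one, integral_norm_pow_add_two_mul_exp_neg_sq_div_two, mul_left_comm, ih,
      Finset.prod_range_succ, finrank_euclideanSpace_fin]
    push_cast; ring

lemma integrable_norm_pow_mul_stdNormalPdf (d : ℕ) (hd : 1 ≤ d) (m : ℕ) :
    Integrable (fun x => ‖x‖ ^ m * stdNormalPdf d x) := by
  have : Nonempty (Fin d) := ⟨⟨0, hd⟩⟩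
  simpa only [stdNormalPdf, mul_left_comm (_ ^ m)] using
    (integrable_norm_pow_mul_exp_neg_sq_div_two volume m).const_mul ((2 * π) ^ (-(d : ℝ) / 2))

/-- (Excess kurtosis of the standard leptokurtic-normal density equals `β`)
For every `d ≥ 1` and every real `β`,
`∫ ‖x‖⁴ q(‖x‖²; β) φ_d(x) dx = d(d+2) + β`, i.e. the Mardia excess kurtosis of
the density `x ↦ q(‖x‖²; β) φ_d(x)` equals `β`. -/
theorem lnDensity_fourth_moment (d : ℕ) (hd : 1 ≤ d) (β : ℝ) :
    ∫ x : EuclideanSpace ℝ (Fin d),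
      ‖x‖ ^ 4 * (lnWeight d β (‖x‖ ^ 2) * stdNormalPdf d x)
      = (d : ℝ) * ((d : ℝ) + 2) + β := by
  set c := β / (8 * (d : ℝ) * ((d : ℝ) + 2)) with hc
  set M := fun k (x : EuclideanSpace ℝ (Fin d)) => ‖x‖ ^ (2 * k) * stdNormalPdf d x
  have hsplit : ∀ x, ‖x‖ ^ 4 * (lnWeight d β (‖x‖ ^ 2) * stdNormalPdf d x) =
      (1 + c * d * (d + 2)) * M 2 x - 2 * c * (d + 2) * M 3 x + c * M 4 x := by
    intro x; rw [lnWeight, ← hc]; ring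
  have hint k : Integrable (M k) := integrable_norm_pow_mul_stdNormalPdf d hd (2 * k)
  have hmom k : ∫ x, M k x = ∏ i ∈ Finset.range k, ((d : ℝ) + 2 * i) :=
    integral_norm_pow_mul_stdNormalPdf_eq_prod d hd k
  simp_rw [hsplit]
  rw [integral_add ?_ ((hint 4).const_mul _),
    integral_sub ((hint 2).const_mul _) ((hint 3).const_mul _),
    MeasureTheory.integral_const_mul, MeasureTheory.integral_const_mul,
    MeasureTheory.integral_const_mul, hmom, hmom, hmom]
  · have hd0 : (d : ℝ) ≠ 0 := by positivity
    simp only [Finset.prod_range_succ, Finset.prod_range_zero, hc]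
    push_cast
    field_simp
    ring
  · exact ((hint 2).const_mul _).sub ((hint 3).const_mul _)
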